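/- arXiv:2301.01676 — 3 statements merged into one kernel-verified Lean document; each statement's English description precedes it below -/
import Mathlib

section
/- Let Γ be a homogeneous non-commutative arithmetic circuit with s non-scalar multiplication gates, and let ℓ ≥ 2. Then the dimension of the F-span of the set {f^J : f computed by some gate of Γ, J an interval of length ℓ in [deg f]} is at most (ℓ−1)·s. -/
/-!
Every restriction `f^J` of a gate to an interval `J` of length `ℓ` (a window) is built from
windows of its children. At a sum gate
and at a product with a constant it is a linear combination of them. At a non-scalar product
`g * h` with `deg g = e`, it is a scalar multiple of a window of `g` (if `J ⊆ [1, e]`) or of `h`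
(if `J ⊆ [e + 1, deg h + e]`), and otherwise it equals `g^[e - t + 1, e] * h^[1, ℓ - t]` with
`1 ≤ t < ℓ`. By induction over the gates, all windows lie in the span of these `ℓ - 1` straddling
products per non-scalar product gate.
-/

/-- Non-commutative polynomials in `n` variables over `F`. -/
abbrev NCPoly (F : Type) [CommSemiring F] (n : ℕ) : Type :=
  MonoidAlgebra F (FreeMonoid (Fin n))

/-- The variable `x_i` as a non-commutative polynomial. -/
noncomputable def NCvar {F : Type} [CommSemiring F] {n : ℕ} (i : Fin n) : NCPoly F n :=
  MonoidAlgebra.of F (FreeMonoid (Fin n)) (FreeMonoid.of i)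

/-- The monomial given by a word (list of variable indices). -/
noncomputable def NCword {F : Type} [CommSemiring F] {n : ℕ} (w : List (Fin n)) : NCPoly F n :=
  MonoidAlgebra.single (FreeMonoid.ofList w) 1

/-- `f` is homogeneous of degree `d`. -/
def IsHomog {F : Type} [CommSemiring F] {n : ℕ} (d : ℕ) (f : NCPoly F n) : Prop :=
  ∀ w ∈ f.coeff.support, (FreeMonoid.toList w).length = d

/-- Restriction `f^J` for the interval `J = [a,b]` (1-indexed positions):
linear extension of `x_{j_1}⋯x_{j_d} ↦ x_{j_a}⋯x_{j_b}`. -/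
noncomputable def NCrestrict {F : Type} [CommSemiring F] {n : ℕ} (a b : ℕ)
    (f : NCPoly F n) : NCPoly F n :=
  MonoidAlgebra.ofCoeff (Finsupp.mapDomain
    (fun w => FreeMonoid.ofList (((FreeMonoid.toList w).drop (a - 1)).take (b + 1 - a))) f.coeff)

/-- Sum of coefficients of `f` (i.e. `f^∅`, all variables set to 1). -/
noncomputable def coeffSum {F : Type} [CommSemiring F] {n : ℕ} (f : NCPoly F n) : F :=
  Finsupp.sum f.coeff (fun _ c => c)

/-- A gate operation; children point to earlier gates (indices `< k`). -/
inductive GateOp (F : Type) (n k : ℕ) where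
  | var : Fin n → GateOp F n k
  | const : F → GateOp F n k
  | add : Fin k → Fin k → GateOp F n k
  | mul : Fin k → Fin k → GateOp F n k

/-- A non-commutative arithmetic circuit: gates in topological order. -/
structure NCCircuit (F : Type) (n : ℕ) where
  gates : ℕ
  gate : (i : Fin gates) → GateOp F n i.val

namespace NCCircuit

variable {F : Type} [CommSemiring F] {n : ℕ}

/-- The polynomial computed at gate `i`. -/
noncomputable def evalAux (c : NCCircuit F n) : (i : ℕ) → i < c.gates → NCPoly F n
  | i, h =>
    match c.gate ⟨i, h⟩ with
    | .var v => NCvar v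
    | .const a => algebraMap F (NCPoly F n) a
    | .add a b => c.evalAux a.val (a.isLt.trans h) + c.evalAux b.val (b.isLt.trans h)
    | .mul a b => c.evalAux a.val (a.isLt.trans h) * c.evalAux b.val (b.isLt.trans h)
  termination_by i _ => i

noncomputable def eval (c : NCCircuit F n) (i : Fin c.gates) : NCPoly F n :=
  c.evalAux i.val i.isLt

/-- `c` computes `f` if some gate computes `f`. -/
def Computes (c : NCCircuit F n) (f : NCPoly F n) : Prop := ∃ i, c.eval i = f

/-- Every gate computes a homogeneous polynomial. -/
def Homogeneous (c : NCCircuit F n) : Prop := ∀ i, ∃ d, IsHomog d (c.eval i)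

/-- `f` is a constant (scalar) polynomial. -/
def IsConstPoly (f : NCPoly F n) : Prop := ∃ a : F, f = algebraMap F (NCPoly F n) a

/-- Size: the number of non-input gates. -/
noncomputable def size (c : NCCircuit F n) : ℕ :=
  {i : Fin c.gates |
    (∃ a b, c.gate i = GateOp.add a b) ∨ (∃ a b, c.gate i = GateOp.mul a b)}.ncard

/-- Non-scalar size: the number of product gates both of whose inputs are non-constant. -/
noncomputable def nonScalarSize (c : NCCircuit F n) : ℕ :=
  {i : Fin c.gates | ∃ a b, c.gate i = GateOp.mul a b ∧
      ¬ IsConstPoly (c.evalAux a.val (a.isLt.trans i.isLt)) ∧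
      ¬ IsConstPoly (c.evalAux b.val (b.isLt.trans i.isLt))}.ncard

/-- A circuit using only variable inputs and product gates. -/
def MulOnly (c : NCCircuit F n) : Prop :=
  ∀ i, (∃ v, c.gate i = GateOp.var v) ∨ (∃ a b, c.gate i = GateOp.mul a b)

end NCCircuit

/-- Left partial derivative `∂_x f`. -/
noncomputable def leftDeriv {F : Type} [CommSemiring F] {n : ℕ} (x : Fin n)
    (f : NCPoly F n) : NCPoly F n :=
  Finsupp.sum f.coeff (fun w c =>
    if (FreeMonoid.toList w).head? = some x then
      MonoidAlgebra.single (FreeMonoid.ofList (FreeMonoid.toList w).tail) c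
    else 0)

/-- `E_{⋅}^k` over the variables `x_j` with `j ≥ i` (0-indexed): the ordered
symmetric polynomial `Σ_{i ≤ j_1 < ⋯ < j_k} x_{j_1}⋯x_{j_k}`. -/
noncomputable def esymAbove (F : Type) [CommSemiring F] (n i k : ℕ) : NCPoly F n :=
  ∑ s ∈ ((Finset.univ : Finset (Fin n)).filter (fun j => i ≤ j.val)).powersetCard k,
    MonoidAlgebra.single (FreeMonoid.ofList (s.sort (· ≤ ·))) 1

/-- The ordered symmetric polynomial `E_n^d`. -/
noncomputable def esym (F : Type) [CommSemiring F] (n d : ℕ) : NCPoly F n :=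
  esymAbove F n 0 d

theorem MonoidAlgebra.mapDomain_mul_of_forall {R M N : Type*} [Semiring R] [Mul M] [Mul N]
    {f f₁ f₂ : M → N} (x y : MonoidAlgebra R M)
    (h : ∀ a ∈ x.coeff.support, ∀ b ∈ y.coeff.support, f (a * b) = f₁ a * f₂ b) :
    mapDomain f (x * y) = mapDomain f₁ x * mapDomain f₂ y := by
  classical
  rw [mul_def, mul_def, mapDomain_sum, coeff_mapDomain,
    Finsupp.sum_mapDomain_index (by simp) (by simp [add_mul])]
  refine Finsupp.sum_congr fun a ha => ?_
  rw [mapDomain_sum, coeff_mapDomain, Finsupp.sum_mapDomain_index (by simp) (by simp [mul_add])]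
  refine Finsupp.sum_congr fun b hb => ?_
  rw [mapDomain_single, h a ha b hb]

section WordSegment

variable {α : Type*} {a b : ℕ} {l₁ l₂ : List α}

/-- The letters of `l` at positions `a, …, b`, counted from `1`. -/
def wordSegment (a b : ℕ) (l : List α) : List α := (l.drop (a - 1)).take (b + 1 - a)

theorem wordSegment_append_of_le (ha : 1 ≤ a) (hb : b ≤ l₁.length) :
    wordSegment a b (l₁ ++ l₂) = wordSegment a b l₁ := by
  rw [wordSegment, List.drop_append, List.take_append, List.length_drop,
    show b + 1 - a - (l₁.length - (a - 1)) = 0 by omega, List.take_zero, List.append_nil,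
    wordSegment]

theorem wordSegment_append_of_lt (ha : l₁.length < a) :
    wordSegment a b (l₁ ++ l₂) = wordSegment (a - l₁.length) (b - l₁.length) l₂ := by
  rw [wordSegment, List.drop_append, List.drop_eq_nil_of_le (by omega), List.nil_append,
    wordSegment, show a - 1 - l₁.length = a - l₁.length - 1 by omega,
    show b + 1 - a = b - l₁.length + 1 - (a - l₁.length) by omega]

theorem wordSegment_append_of_le_of_lt (ha : 1 ≤ a) (ha' : a ≤ l₁.length) (hb : l₁.length < b) :
    wordSegment a b (l₁ ++ l₂) =
      wordSegment a l₁.length l₁ ++ wordSegment 1 (b - l₁.length) l₂ := by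
  have hlen : (l₁.drop (a - 1)).length = l₁.length + 1 - a := by
    rw [List.length_drop]; omega
  rw [wordSegment, List.drop_append, show a - 1 - l₁.length = 0 by omega, List.drop_zero,
    List.take_append, hlen, wordSegment, wordSegment, List.take_of_length_le hlen.le,
    List.take_of_length_le (by omega), List.drop_zero,
    show b + 1 - a - (l₁.length + 1 - a) = b - l₁.length + 1 - 1 by omega]

end WordSegment

section NCPoly

variable {F : Type} [CommSemiring F] {n : ℕ}

theorem NCrestrict_eq_mapDomain (a b : ℕ) (f : NCPoly F n) :
    NCrestrict a b f =
      MonoidAlgebra.mapDomain (fun w => FreeMonoid.ofList (wordSegment a b w.toList)) f :=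
  rfl

theorem NCrestrict_zero (a b : ℕ) : NCrestrict a b (0 : NCPoly F n) = 0 :=
  MonoidAlgebra.mapDomain_zero _

theorem NCrestrict_add (a b : ℕ) (g h : NCPoly F n) :
    NCrestrict a b (g + h) = NCrestrict a b g + NCrestrict a b h :=
  MonoidAlgebra.mapDomain_add _ g h

theorem NCrestrict_smul (a b : ℕ) (α : F) (f : NCPoly F n) :
    NCrestrict a b (α • f) = α • NCrestrict a b f :=
  MonoidAlgebra.mapDomain_smul _ α f

theorem mapDomain_const_one (f : NCPoly F n) :
    MonoidAlgebra.mapDomain (fun _ => (1 : FreeMonoid (Fin n))) f =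
      algebraMap F (NCPoly F n) (coeffSum f) := by
  ext : 1
  simp only [MonoidAlgebra.coe_algebraMap, Function.comp_apply, Algebra.algebraMap_self,
    RingHom.id_apply, MonoidAlgebra.coeff_mapDomain, MonoidAlgebra.coeff_single,
    Finsupp.mapDomain, coeffSum, Finsupp.sum]
  exact (Finsupp.single_finsetSum _ _ _).symm

theorem NCrestrict_mul_of_le {g : NCPoly F n} {d a b : ℕ} (hg : IsHomog d g) (ha : 1 ≤ a)
    (hb : b ≤ d) (h : NCPoly F n) :
    NCrestrict a b (g * h) = coeffSum h • NCrestrict a b g := by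
  rw [NCrestrict_eq_mapDomain, NCrestrict_eq_mapDomain,
    MonoidAlgebra.mapDomain_mul_of_forall (f₂ := fun _ => 1), mapDomain_const_one h,
    ← Algebra.commutes, ← Algebra.smul_def]
  intro u hu v _
  rw [mul_one, FreeMonoid.toList_mul, wordSegment_append_of_le ha (hg u hu ▸ hb)]

theorem NCrestrict_mul_of_lt {g : NCPoly F n} {d a b : ℕ} (hg : IsHomog d g) (ha : d < a)
    (h : NCPoly F n) :
    NCrestrict a b (g * h) = coeffSum g • NCrestrict (a - d) (b - d) h := by
  rw [NCrestrict_eq_mapDomain, NCrestrict_eq_mapDomain,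
    MonoidAlgebra.mapDomain_mul_of_forall (f₁ := fun _ => 1), mapDomain_const_one g,
    ← Algebra.smul_def]
  intro u hu v _
  rw [one_mul, FreeMonoid.toList_mul, wordSegment_append_of_lt (hg u hu ▸ ha), hg u hu]

theorem NCrestrict_mul_of_le_of_lt {g : NCPoly F n} {d a b : ℕ} (hg : IsHomog d g) (ha : 1 ≤ a)
    (had : a ≤ d) (hb : d < b) (h : NCPoly F n) :
    NCrestrict a b (g * h) = NCrestrict a d g * NCrestrict 1 (b - d) h := by
  rw [NCrestrict_eq_mapDomain, NCrestrict_eq_mapDomain, NCrestrict_eq_mapDomain,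
    MonoidAlgebra.mapDomain_mul_of_forall]
  intro u hu v _
  rw [FreeMonoid.toList_mul, ← hg u hu,
    wordSegment_append_of_le_of_lt ha (hg u hu ▸ had) (hg u hu ▸ hb)]
  rfl

theorem isHomog_NCvar (v : Fin n) : IsHomog 1 (NCvar v : NCPoly F n) := by
  intro w hw
  rw [NCvar, MonoidAlgebra.of_apply, MonoidAlgebra.coeff_single] at hw
  rw [Finset.mem_singleton.mp (Finsupp.support_single_subset hw), FreeMonoid.toList_of,
    List.length_singleton]

theorem isHomog_algebraMap (α : F) : IsHomog 0 (algebraMap F (NCPoly F n) α) := by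
  intro w hw
  rw [MonoidAlgebra.coe_algebraMap, Function.comp_apply, MonoidAlgebra.coeff_single] at hw
  rw [Finset.mem_singleton.mp (Finsupp.support_single_subset hw), FreeMonoid.toList_one,
    List.length_nil]

namespace IsHomog

variable {d e : ℕ} {f g h : NCPoly F n}

theorem eq_of_ne_zero (hd : IsHomog d f) (he : IsHomog e f) (hf : f ≠ 0) : d = e := by
  obtain ⟨w, hw⟩ := Finsupp.support_nonempty_iff.mpr (mt MonoidAlgebra.coeff_eq_zero.mp hf)
  rw [← hd w hw, he w hw]

theorem add (hg : IsHomog d g) (hh : IsHomog d h) : IsHomog d (g + h) := by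
  classical
  intro w hw
  rcases Finset.mem_union.mp (Finsupp.support_add hw) with hw | hw
  exacts [hg w hw, hh w hw]

theorem mul (hg : IsHomog d g) (hh : IsHomog e h) : IsHomog (d + e) (g * h) := by
  classical
  intro w hw
  obtain ⟨u, hu, v, hv, rfl⟩ := Finset.mem_mul.mp (MonoidAlgebra.support_coeff_mul_subset g h hw)
  rw [FreeMonoid.toList_mul, List.length_append, hg u hu, hh v hv]

theorem left_of_add (hgh : IsHomog d (g + h)) (hg : IsHomog e g) {e' : ℕ} (hh : IsHomog e' h)
    (hne : g + h ≠ 0) : IsHomog d g := by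
  by_cases hee' : e = e'
  · subst hee'
    rwa [← (hg.add hh).eq_of_ne_zero hgh hne]
  intro w hw
  have hhw : h.coeff w = 0 := by
    by_contra hhw
    exact hee' ((hg w hw).symm.trans (hh w (Finsupp.mem_support_iff.mpr hhw)))
  apply hgh
  rw [Finsupp.mem_support_iff, MonoidAlgebra.coeff_add, Finsupp.add_apply, hhw, add_zero]
  exact Finsupp.mem_support_iff.mp hw

end IsHomog

noncomputable def ncDegree (f : NCPoly F n) : ℕ :=
  f.coeff.support.sup fun w => w.toList.length

theorem IsHomog.ncDegree_eq {d : ℕ} {f : NCPoly F n} (hd : IsHomog d f) (hf : f ≠ 0) :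
    ncDegree f = d := by
  obtain ⟨w, hw⟩ := Finsupp.support_nonempty_iff.mpr (mt MonoidAlgebra.coeff_eq_zero.mp hf)
  exact le_antisymm (Finset.sup_le fun u hu => (hd u hu).le) (hd w hw ▸ Finset.le_sup hw)

/-- The window `(g * h)^J` of length `ℓ` when the first `t` positions of `J` fall in `g`. -/
noncomputable def straddleProduct (ℓ t : ℕ) (g h : NCPoly F n) : NCPoly F n :=
  NCrestrict (ncDegree g + 1 - t) (ncDegree g) g * NCrestrict 1 (ℓ - t) h

def RestrictionsMem (ℓ : ℕ) (V : Submodule F (NCPoly F n)) (f : NCPoly F n) : Prop :=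
  ∀ d a b, IsHomog d f → 1 ≤ a → b ≤ d → b + 1 = a + ℓ → NCrestrict a b f ∈ V

variable {ℓ : ℕ} {V : Submodule F (NCPoly F n)}

theorem restrictionsMem_of_isHomog_lt {e : ℕ} {f : NCPoly F n} (hf : IsHomog e f) (he : e < ℓ) :
    RestrictionsMem ℓ V f := by
  intro d a b hd ha hbd hba
  by_cases hf0 : f = 0
  · rw [hf0, NCrestrict_zero]
    exact V.zero_mem
  · have := hd.eq_of_ne_zero hf hf0
    omega

theorem RestrictionsMem.add {g h : NCPoly F n} {dg dh : ℕ} (hg : IsHomog dg g)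
    (hh : IsHomog dh h) (hgV : RestrictionsMem ℓ V g) (hhV : RestrictionsMem ℓ V h) :
    RestrictionsMem ℓ V (g + h) := by
  intro d a b hd ha hbd hba
  by_cases hgh : g + h = 0
  · rw [hgh, NCrestrict_zero]
    exact V.zero_mem
  have hd' : IsHomog d (h + g) := add_comm g h ▸ hd
  rw [NCrestrict_add]
  exact V.add_mem (hgV d a b (hd.left_of_add hg hh hgh) ha hbd hba)
    (hhV d a b (hd'.left_of_add hh hg (add_comm g h ▸ hgh)) ha hbd hba)

theorem RestrictionsMem.mul {g h : NCPoly F n} {dg dh : ℕ} (hg : IsHomog dg g)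
    (hh : IsHomog dh h) (hgV : RestrictionsMem ℓ V g) (hhV : RestrictionsMem ℓ V h)
    (hV : ∀ t ∈ Finset.Ico 1 ℓ, straddleProduct ℓ t g h ∈ V) :
    RestrictionsMem ℓ V (g * h) := by
  intro d a b hd ha hbd hba
  by_cases hgh : g * h = 0
  · rw [hgh, NCrestrict_zero]
    exact V.zero_mem
  have hd' : d = dg + dh := hd.eq_of_ne_zero (hg.mul hh) hgh
  rcases le_or_gt b dg with hb | hb
  · rw [NCrestrict_mul_of_le hg ha hb]
    exact V.smul_mem _ (hgV dg a b hg ha hb hba)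
  rcases le_or_gt a dg with ha' | ha'
  · have hg0 : g ≠ 0 := by
      rintro rfl
      exact hgh (zero_mul h)
    have ht : dg + 1 - a ∈ Finset.Ico 1 ℓ := Finset.mem_Ico.mpr ⟨by omega, by omega⟩
    convert hV _ ht using 1
    rw [NCrestrict_mul_of_le_of_lt hg ha ha' hb, straddleProduct, hg.ncDegree_eq hg0,
      show dg + 1 - (dg + 1 - a) = a by omega, show ℓ - (dg + 1 - a) = b - dg by omega]
  · rw [NCrestrict_mul_of_lt hg ha']
    exact V.smul_mem _ (hhV dh (a - dg) (b - dg) hh (by omega) (by omega) (by omega))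

end NCPoly

section Field

variable {F : Type} [Field F] {n : ℕ}

theorem IsHomog.of_smul {d : ℕ} {f : NCPoly F n} {α : F} (hf : IsHomog d (α • f)) (hα : α ≠ 0) :
    IsHomog d f := fun w hw =>
  hf w (by rwa [MonoidAlgebra.coeff_smul, Finsupp.support_smul_eq hα])

theorem RestrictionsMem.smul {ℓ : ℕ} {V : Submodule F (NCPoly F n)} {f : NCPoly F n}
    (hf : RestrictionsMem ℓ V f) (α : F) : RestrictionsMem ℓ V (α • f) := by
  intro d a b hd ha hbd hba
  by_cases hα : α = 0
  · rw [hα, zero_smul, NCrestrict_zero]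
    exact V.zero_mem
  · rw [NCrestrict_smul]
    exact V.smul_mem α (hf d a b (hd.of_smul hα) ha hbd hba)

end Field

namespace NCCircuit

section

variable {F : Type} [CommSemiring F] {n : ℕ}

def IsNonScalarMul (c : NCCircuit F n) (i : Fin c.gates) : Prop :=
  ∃ a b, c.gate i = GateOp.mul a b ∧
    ¬ IsConstPoly (c.evalAux a.val (a.isLt.trans i.isLt)) ∧
    ¬ IsConstPoly (c.evalAux b.val (b.isLt.trans i.isLt))

noncomputable def gateStraddle (c : NCCircuit F n) (ℓ : ℕ) (i : Fin c.gates) (t : ℕ) :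
    NCPoly F n :=
  match c.gate i with
  | .mul p q => straddleProduct ℓ t (c.evalAux p.val (p.isLt.trans i.isLt))
      (c.evalAux q.val (q.isLt.trans i.isLt))
  | _ => 0

end

theorem restrictionsMem_evalAux {F : Type} [Field F] {n : ℕ} (c : NCCircuit F n)
    (hc : c.Homogeneous) {ℓ : ℕ} (hℓ : 2 ≤ ℓ) {V : Submodule F (NCPoly F n)}
    (hV : ∀ i, c.IsNonScalarMul i → ∀ t ∈ Finset.Ico 1 ℓ, c.gateStraddle ℓ i t ∈ V)
    (i : ℕ) (hi : i < c.gates) : RestrictionsMem ℓ V (c.evalAux i hi) := by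
  induction i using Nat.strong_induction_on with
  | _ i IH =>
  rw [evalAux]
  rcases hgate : c.gate ⟨i, hi⟩ with v | α | ⟨p, q⟩ | ⟨p, q⟩ <;> dsimp only
  · exact restrictionsMem_of_isHomog_lt (isHomog_NCvar v) hℓ
  · exact restrictionsMem_of_isHomog_lt (isHomog_algebraMap α) (by omega)
  · obtain ⟨dp, hp⟩ := hc ⟨p, p.isLt.trans hi⟩
    obtain ⟨dq, hq⟩ := hc ⟨q, q.isLt.trans hi⟩
    exact (IH p p.isLt _).add hp hq (IH q q.isLt _)
  · by_cases hpc : IsConstPoly (c.evalAux p (p.isLt.trans hi))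
    · obtain ⟨α, hα⟩ := hpc
      rw [hα, ← Algebra.smul_def]
      exact (IH q q.isLt _).smul α
    by_cases hqc : IsConstPoly (c.evalAux q (q.isLt.trans hi))
    · obtain ⟨α, hα⟩ := hqc
      rw [hα, ← Algebra.commutes, ← Algebra.smul_def]
      exact (IH p p.isLt _).smul α
    obtain ⟨dp, hp⟩ := hc ⟨p, p.isLt.trans hi⟩
    obtain ⟨dq, hq⟩ := hc ⟨q, q.isLt.trans hi⟩
    refine (IH p p.isLt _).mul hp hq (IH q q.isLt _) fun t ht => ?_
    have := hV ⟨i, hi⟩ ⟨p, q, hgate, hpc, hqc⟩ t ht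
    rwa [gateStraddle, hgate] at this

end NCCircuit

/-- If `Γ` is a homogeneous circuit with `s` non-scalar product gates and
`ℓ ≥ 2`, then the span of `{f^J : f computed by a gate of Γ, J ⊆ [deg f] an
interval of length ℓ}` has dimension at most `(ℓ-1)·s`. -/
theorem measure_le_nonScalarSize (F : Type) [Field F] (n : ℕ)
    (c : NCCircuit F n) (hc : c.Homogeneous) (ℓ : ℕ) (hℓ : 2 ≤ ℓ) :
    Module.rank F (Submodule.span F
      {g : NCPoly F n | ∃ (i : Fin c.gates) (d a b : ℕ),
        IsHomog d (c.eval i) ∧ 1 ≤ a ∧ a ≤ b ∧ b ≤ d ∧ b + 1 = a + ℓ ∧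
        g = NCrestrict a b (c.eval i)})
      ≤ ((ℓ - 1) * c.nonScalarSize : ℕ) := by
  classical
  set M := (Set.toFinite {i | c.IsNonScalarMul i}).toFinset
  set T := (M ×ˢ Finset.Ico 1 ℓ).image fun z => c.gateStraddle ℓ z.1 z.2
  have hT : ∀ i, c.IsNonScalarMul i → ∀ t ∈ Finset.Ico 1 ℓ,
      c.gateStraddle ℓ i t ∈ Submodule.span F (T : Set (NCPoly F n)) := fun i hi t ht =>
    Submodule.subset_span <| Finset.mem_coe.mpr <| Finset.mem_image.mpr
      ⟨(i, t), Finset.mem_product.mpr ⟨(Set.Finite.mem_toFinset _).mpr hi, ht⟩, rfl⟩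
  calc _ ≤ Module.rank F (Submodule.span F (T : Set (NCPoly F n))) := by
        refine Submodule.rank_mono (Submodule.span_le.mpr ?_)
        rintro _ ⟨i, d, a, b, hd, ha, -, hbd, hba, rfl⟩
        exact c.restrictionsMem_evalAux hc hℓ hT i i.isLt d a b hd ha hbd hba
    _ ≤ T.card := rank_span_finset_le T
    _ ≤ ((ℓ - 1) * c.nonScalarSize : ℕ) := by
      rw [Nat.cast_le, show c.nonScalarSize = M.card from Set.ncard_eq_toFinset_card _ _,
        mul_comm, ← Nat.card_Ico 1 ℓ, ← Finset.card_product]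
      exact Finset.card_image_le
end

section
/- Every homogeneous non-commutative circuit computing the monomial f = ∏_{i=1}^n ∏_{j=1}^n (x_i x_j) (in some fixed order of the n² pairs, so that f has degree 2n² and every pair (i,j) appears as a consecutive block at even positions) contains at least n² non-scalar product gates. -/
/-! Read off the letters of a word at two adjacent positions `k, k + 1`: this is a linear map
`window k 2`. If `A` is homogeneous, the window of `A * B` lies inside `A`, or inside `B` (and is
then a scalar multiple of a window of that factor), or straddles the junction, where it is
`lastLetter A * window 0 1 B`. A product with a constant factor is a scalar multiple of the other
factor, so by induction over the circuit every window of every gate lies in the span of the junction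
polynomials of the non-scalar product gates. The windows of `f` at the even positions are the `n²`
distinct monomials `x_i x_j`, which are linearly independent; hence there are at least `n²`
non-scalar product gates. -/

theorem List.drop_mul_flatMap_of_length_eq {α β : Type*} {G : α → List β} {L : ℕ}
    (hG : ∀ x, (G x).length = L) :
    ∀ {l : List α} {k : ℕ} (hk : k < l.length),
      (l.flatMap G).drop (L * k) = G l[k] ++ (l.drop (k + 1)).flatMap G
  | _ :: _, 0, _ => by simp
  | x :: _, k + 1, hk => by
      have hLk : L * (k + 1) = (G x).length + L * k := by rw [hG]; ring
      rw [List.flatMap_cons, hLk, List.drop_length_add_append,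
        List.drop_mul_flatMap_of_length_eq hG (by simpa using hk)]
      simp

theorem NCword_append {F : Type} [CommSemiring F] {n : ℕ} (u v : List (Fin n)) :
    (NCword (u ++ v) : NCPoly F n) = NCword u * NCword v := by
  simp [NCword, MonoidAlgebra.single_mul_single, FreeMonoid.ofList_append]

theorem coeffSum_single {F : Type} [CommSemiring F] {n : ℕ} (w : FreeMonoid (Fin n)) (a : F) :
    coeffSum (MonoidAlgebra.single w a) = a := by
  simp [coeffSum]

theorem coeffSum_add {F : Type} [CommSemiring F] {n : ℕ} (A B : NCPoly F n) :
    coeffSum (A + B) = coeffSum A + coeffSum B :=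
  Finsupp.sum_add_index' (fun _ => rfl) (fun _ _ _ => rfl)

theorem IsHomog.mul_induction {F : Type} [CommSemiring F] {n d : ℕ} {A : NCPoly F n}
    (hA : IsHomog d A) (B : NCPoly F n) {P : NCPoly F n → NCPoly F n → Prop}
    (zero_left : ∀ B, P 0 B) (zero_right : ∀ A, P A 0)
    (add_left : ∀ A₁ A₂ B, P A₁ B → P A₂ B → P (A₁ + A₂) B)
    (add_right : ∀ A B₁ B₂, P A B₁ → P A B₂ → P A (B₁ + B₂))
    (single : ∀ u v a b, u.toList.length = d →
      P (MonoidAlgebra.single u a) (MonoidAlgebra.single v b)) :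
    P A B := by
  induction B using MonoidAlgebra.induction_linear with
  | zero => exact zero_right A
  | add B₁ B₂ h₁ h₂ => exact add_right A B₁ B₂ h₁ h₂
  | single v b =>
    rw [← A.sum_coeff_single, Finsupp.sum]
    exact Finset.sum_induction _ (P · _) (fun _ _ => add_left _ _ _) (zero_left _)
      fun u hu => single u v _ _ (hA u hu)

namespace NCPoly

variable {F : Type} [CommSemiring F] {n : ℕ}

/-- Positions are 0-indexed, and words too short to contain the window are sent to `0`
(unlike `NCrestrict`, which truncates them). -/
noncomputable def wordWindow (F : Type) [CommSemiring F] (k m : ℕ) (w : FreeMonoid (Fin n)) :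
    NCPoly F n :=
  if k + m ≤ w.toList.length then NCword ((w.toList.drop k).take m) else 0

theorem wordWindow_of_lt {k m : ℕ} {w : FreeMonoid (Fin n)} (h : w.toList.length < k + m) :
    wordWindow F k m w = 0 :=
  if_neg h.not_ge

theorem wordWindow_mul_of_add_le_length {k m : ℕ} {u : FreeMonoid (Fin n)}
    (h : k + m ≤ u.toList.length) (v : FreeMonoid (Fin n)) :
    wordWindow F k m (u * v) = wordWindow F k m u := by
  unfold wordWindow
  rw [FreeMonoid.toList_mul, List.length_append, if_pos h, if_pos (by omega),
    List.drop_append_of_le_length (by omega),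
    List.take_append_of_le_length (by rw [List.length_drop]; omega)]

theorem wordWindow_mul_of_length_le {k m : ℕ} {u : FreeMonoid (Fin n)} (h : u.toList.length ≤ k)
    (v : FreeMonoid (Fin n)) :
    wordWindow F k m (u * v) = wordWindow F (k - u.toList.length) m v := by
  simp only [wordWindow, FreeMonoid.toList_mul, List.length_append,
    List.drop_append, List.drop_eq_nil_of_le h, List.nil_append]
  exact if_congr (by omega) rfl rfl

theorem wordWindow_mul_of_lt_of_lt {k m : ℕ} {u : FreeMonoid (Fin n)} (h₁ : k < u.toList.length)
    (h₂ : u.toList.length < k + m) (v : FreeMonoid (Fin n)) :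
    wordWindow F k m (u * v) =
      wordWindow F k (u.toList.length - k) u * wordWindow F 0 (k + m - u.toList.length) v := by
  simp only [wordWindow, FreeMonoid.toList_mul, List.length_append,
    List.drop_zero, List.drop_append_of_le_length h₁.le, List.take_append,
    List.length_drop, if_pos (show k + (u.toList.length - k) ≤ u.toList.length by omega),
    List.take_of_length_le (show (u.toList.drop k).length ≤ m by simp; omega),
    List.take_of_length_le (show (u.toList.drop k).length ≤ u.toList.length - k by simp)]
  split_ifs
  · rw [← NCword_append]; congr 3; omega
  all_goals first | omega | rw [mul_zero]

noncomputable def window (k m : ℕ) : NCPoly F n →ₗ[F] NCPoly F n :=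
  Finsupp.linearCombination F (wordWindow F k m) ∘ₗ
    (MonoidAlgebra.coeffLinearEquiv F).toLinearMap

theorem window_single (k m : ℕ) (w : FreeMonoid (Fin n)) (a : F) :
    window k m (MonoidAlgebra.single w a) = a • wordWindow F k m w := by
  simp [window, MonoidAlgebra.coeffLinearEquiv]

variable {d k m : ℕ} {A : NCPoly F n}

theorem window_mul_of_add_le (hA : IsHomog d A) (h : k + m ≤ d) (B : NCPoly F n) :
    window k m (A * B) = coeffSum B • window k m A := by
  refine hA.mul_induction B (P := fun A B => window k m (A * B) = coeffSum B • window k m A)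
    (by simp) (by simp [coeffSum]) (fun _ _ _ h₁ h₂ => ?_) (fun _ _ _ h₁ h₂ => ?_) ?_
  · simp only [add_mul, map_add, h₁, h₂, smul_add]
  · simp only [mul_add, map_add, h₁, h₂, coeffSum_add, add_smul]
  · intro u v a b hu
    rw [MonoidAlgebra.single_mul_single, window_single, window_single, coeffSum_single,
      wordWindow_mul_of_add_le_length (hu ▸ h), smul_smul, mul_comm]

theorem window_mul_of_le (hA : IsHomog d A) (h : d ≤ k) (B : NCPoly F n) :
    window k m (A * B) = coeffSum A • window (k - d) m B := by
  refine hA.mul_induction B (P := fun A B => window k m (A * B) = coeffSum A • window (k - d) m B)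
    (by simp [coeffSum]) (by simp) (fun _ _ _ h₁ h₂ => ?_) (fun _ _ _ h₁ h₂ => ?_) ?_
  · simp only [add_mul, map_add, h₁, h₂, coeffSum_add, add_smul]
  · simp only [mul_add, map_add, h₁, h₂, smul_add]
  · intro u v a b hu
    rw [MonoidAlgebra.single_mul_single, window_single, window_single, coeffSum_single,
      wordWindow_mul_of_length_le (hu ▸ h), hu, smul_smul]

theorem window_mul_of_lt_of_lt (hA : IsHomog d A) (h₁ : k < d) (h₂ : d < k + m)
    (B : NCPoly F n) :
    window k m (A * B) = window k (d - k) A * window 0 (k + m - d) B := by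
  refine hA.mul_induction B
    (P := fun A B => window k m (A * B) = window k (d - k) A * window 0 (k + m - d) B)
    (by simp) (by simp) (fun _ _ _ h₁ h₂ => ?_) (fun _ _ _ h₁ h₂ => ?_) ?_
  · simp only [add_mul, map_add, h₁, h₂]
  · simp only [mul_add, map_add, h₁, h₂]
  · intro u v a b hu
    rw [MonoidAlgebra.single_mul_single, window_single, window_single, window_single,
      wordWindow_mul_of_lt_of_lt (hu ▸ h₁) (hu ▸ h₂), hu, smul_mul_smul_comm, mul_comm]

noncomputable def lastLetter : NCPoly F n →ₗ[F] NCPoly F n :=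
  Finsupp.linearCombination F (fun w => wordWindow F (w.toList.length - 1) 1 w) ∘ₗ
    (MonoidAlgebra.coeffLinearEquiv F).toLinearMap

theorem window_one_eq_lastLetter (hA : IsHomog (k + 1) A) : window k 1 A = lastLetter A := by
  simp only [window, lastLetter, LinearMap.comp_apply, Finsupp.linearCombination_apply]
  refine Finsupp.sum_congr fun w hw => ?_
  rw [show w.toList.length - 1 = k by simp [hA w hw]]

theorem window_two_mul_mem (hA : IsHomog d A) {B : NCPoly F n} {V : Submodule F (NCPoly F n)}
    (hAV : ∀ k, window k 2 A ∈ V) (hBV : ∀ k, window k 2 B ∈ V)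
    (hAB : lastLetter A * window 0 1 B ∈ V) (k : ℕ) : window k 2 (A * B) ∈ V := by
  obtain h | rfl | h : k + 2 ≤ d ∨ d = k + 1 ∨ d ≤ k := by omega
  · rw [window_mul_of_add_le hA h]
    exact V.smul_mem _ (hAV k)
  · rw [window_mul_of_lt_of_lt hA (by omega) (by omega), Nat.add_sub_cancel_left,
      show k + 2 - (k + 1) = 1 by omega, window_one_eq_lastLetter hA]
    exact hAB
  · rw [window_mul_of_le hA h]
    exact V.smul_mem _ (hBV (k - d))

end NCPoly

def pairsWord (n : ℕ) : List (Fin n) :=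
  (List.finRange n).flatMap fun i => (List.finRange n).flatMap fun j => [i, j]

theorem take_two_drop_pairsWord {n : ℕ} (i j : Fin n) :
    ((pairsWord n).drop (2 * (n * i + j))).take 2 = [i, j] := by
  have hrow (i : Fin n) : ((List.finRange n).flatMap fun j => [i, j]).length = 2 * n := by
    simp [List.length_flatMap, mul_comm]
  have hget (i : Fin n) : (List.finRange n)[(i : ℕ)]'(by simp) = i := by simp
  rw [pairsWord, mul_add, ← mul_assoc, ← List.drop_drop,
    List.drop_mul_flatMap_of_length_eq hrow (by simp), hget,
    List.drop_append_of_le_length (by rw [hrow]; omega),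
    List.drop_mul_flatMap_of_length_eq (G := fun j => [i, j]) (fun _ => rfl) (by simp), hget]
  simp

theorem NCPoly.window_two_pairsWord {F : Type} [CommSemiring F] {n : ℕ} (i j : Fin n) :
    NCPoly.window (2 * (n * i + j)) 2 (NCword (pairsWord n)) = (NCword [i, j] : NCPoly F n) := by
  have hij := take_two_drop_pairsWord i j
  have hlen : 2 * (n * i + j) + 2 ≤ (pairsWord n).length := by
    have := congrArg List.length hij
    simp only [List.length_take, List.length_drop, List.length_cons, List.length_nil] at this
    omega
  rw [NCword, NCPoly.window_single, one_smul, NCPoly.wordWindow, FreeMonoid.toList_ofList,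
    if_pos hlen, hij]

theorem linearIndependent_NCword_pair {F : Type} [CommSemiring F] {n : ℕ} :
    LinearIndependent F fun p : Fin n × Fin n => (NCword [p.1, p.2] : NCPoly F n) := by
  have hinj : Function.Injective fun p : Fin n × Fin n => FreeMonoid.ofList [p.1, p.2] :=
    fun p q h => by simpa [Prod.ext_iff] using FreeMonoid.ofList.injective h
  exact (MonoidAlgebra.basis (FreeMonoid (Fin n)) F).linearIndependent.comp _ hinj

theorem LinearIndependent.card_le_ncard_of_subset_span {R M ι : Type*} [Ring R]
    [StrongRankCondition R] [AddCommGroup M] [Module R M] [Fintype ι] {v : ι → M}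
    (hv : LinearIndependent R v) {s : Set M} (hs : s.Finite)
    (h : Set.range v ⊆ Submodule.span R s) : Fintype.card ι ≤ s.ncard := by
  have := hs.fintype
  rw [← Nat.card_coe_set_eq, Nat.card_eq_fintype_card]
  exact linearIndependent_le_span_aux' v hv s h

namespace NCCircuit

open NCPoly

variable {F : Type} [CommSemiring F] {n : ℕ} (c : NCCircuit F n)

def child (i : Fin c.gates) (a : Fin i) : Fin c.gates :=
  ⟨a, a.isLt.trans i.isLt⟩

variable {c}

theorem eval_of_gate_eq_var {i : Fin c.gates} {v : Fin n} (h : c.gate i = .var v) :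
    c.eval i = NCvar v := by
  rw [eval, evalAux]; simp only [h]

theorem eval_of_gate_eq_const {i : Fin c.gates} {x : F} (h : c.gate i = .const x) :
    c.eval i = algebraMap F (NCPoly F n) x := by
  rw [eval, evalAux]; simp only [h]

theorem eval_of_gate_eq_add {i : Fin c.gates} {a b : Fin i} (h : c.gate i = .add a b) :
    c.eval i = c.eval (c.child i a) + c.eval (c.child i b) := by
  rw [eval, evalAux]; simp only [h]; rfl

theorem eval_of_gate_eq_mul {i : Fin c.gates} {a b : Fin i} (h : c.gate i = .mul a b) :
    c.eval i = c.eval (c.child i a) * c.eval (c.child i b) := by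
  rw [eval, evalAux]; simp only [h]; rfl

variable (c)

def nonScalarGates : Set (Fin c.gates) :=
  {i | ∃ a b, c.gate i = .mul a b ∧
    ¬IsConstPoly (c.eval (c.child i a)) ∧ ¬IsConstPoly (c.eval (c.child i b))}

noncomputable def junction (i : Fin c.gates) : NCPoly F n :=
  match c.gate i with
  | .mul a b => lastLetter (c.eval (c.child i a)) * window 0 1 (c.eval (c.child i b))
  | _ => 0

variable {c}

theorem junction_of_gate_eq_mul {i : Fin c.gates} {a b : Fin i} (h : c.gate i = .mul a b) :
    c.junction i = lastLetter (c.eval (c.child i a)) * window 0 1 (c.eval (c.child i b)) := by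
  rw [junction, h]

theorem window_two_eval_mem_span (hc : c.Homogeneous) (i : Fin c.gates) (k : ℕ) :
    window k 2 (c.eval i) ∈ Submodule.span F (c.junction '' c.nonScalarGates) := by
  induction i using WellFoundedLT.induction generalizing k with
  | ind i ih =>
    have ih_child (a : Fin i) (k : ℕ) := ih (c.child i a) a.isLt k
    cases hg : c.gate i with
    | var v =>
      rw [eval_of_gate_eq_var hg, NCvar, MonoidAlgebra.of_apply, window_single,
        wordWindow_of_lt (by simp), smul_zero]
      exact Submodule.zero_mem _
    | const x =>
      rw [eval_of_gate_eq_const hg, MonoidAlgebra.coe_algebraMap, Function.comp_apply,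
        window_single, wordWindow_of_lt (by simp), smul_zero]
      exact Submodule.zero_mem _
    | add a b =>
      rw [eval_of_gate_eq_add hg, map_add]
      exact Submodule.add_mem _ (ih_child a k) (ih_child b k)
    | mul a b =>
      rw [eval_of_gate_eq_mul hg]
      by_cases hA : IsConstPoly (c.eval (c.child i a))
      · obtain ⟨x, hx⟩ := hA
        rw [hx, ← Algebra.smul_def, map_smul]
        exact Submodule.smul_mem _ x (ih_child b k)
      by_cases hB : IsConstPoly (c.eval (c.child i b))
      · obtain ⟨x, hx⟩ := hB
        rw [hx, ← Algebra.commutes, ← Algebra.smul_def, map_smul]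
        exact Submodule.smul_mem _ x (ih_child a k)
      obtain ⟨d, hd⟩ := hc (c.child i a)
      refine window_two_mul_mem hd (ih_child a) (ih_child b) ?_ k
      rw [← junction_of_gate_eq_mul hg]
      exact Submodule.subset_span ⟨i, ⟨a, b, hg, hA, hB⟩, rfl⟩

end NCCircuit

/-- Every homogeneous circuit computing the monomial
`f = x_1x_1 x_1x_2 ⋯ x_1x_n x_2x_1 ⋯ x_nx_n` of degree `2n²` (each pair
`(i,j)` appearing as a consecutive block) contains at least `n²` non-scalar
product gates. -/
theorem monomial_pairs_lower_bound (F : Type) [Field F] (n : ℕ)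
    (c : NCCircuit F n) (hc : c.Homogeneous)
    (hcomp : c.Computes
      (NCword ((List.finRange n).flatMap (fun i => (List.finRange n).flatMap (fun j => [i, j]))))) :
    n ^ 2 ≤ c.nonScalarSize := by
  obtain ⟨i₀, hi₀ : c.eval i₀ = NCword (pairsWord n)⟩ := hcomp
  have hpairs : Set.range (fun p : Fin n × Fin n => (NCword [p.1, p.2] : NCPoly F n)) ⊆
      Submodule.span F (c.junction '' c.nonScalarGates) := by
    rintro _ ⟨⟨i, j⟩, rfl⟩
    dsimp only
    rw [← NCPoly.window_two_pairsWord i j, ← hi₀]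
    exact c.window_two_eval_mem_span hc i₀ _
  calc n ^ 2 = Fintype.card (Fin n × Fin n) := by simp [sq]
    _ ≤ (c.junction '' c.nonScalarGates).ncard :=
      linearIndependent_NCword_pair.card_le_ncard_of_subset_span (Set.toFinite _) hpairs
    _ ≤ c.nonScalarGates.ncard := Set.ncard_image_le (Set.toFinite _)
    _ = c.nonScalarSize := rfl
end

section
/- Let 1 < k < n. For i ∈ [n−k] and j ∈ [k−1], let f_{i,j} := (E_{n-i}^{k}(x_{i+1},...,x_n))^{[j,j+1]}, the degree-2 polynomial obtained by restricting to positions j and j+1 of each monomial. Then the (n−k)(k−1) polynomials f_{i,j} are linearly independent over F. -/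
/-!
In the paper's indexing (the code counts `i`, `j` and the variables from `0`), pair `f_{i,j}`
with the coefficient of `x_{i+j} x_{n-k+j+1}`. A `k`-subset of `{i+1, …, n}` whose `j`-th and
`(j+1)`-st smallest elements are `i+j` and `n-k+j+1` is forced to be
`{i+1, …, i+j} ∪ {n-k+j+1, …, n}`, so this coefficient of `f_{i,j}` is `1`. The same monomial
occurs in `f_{i',j'}` only if `j ≤ j'` and `i' + j' ≤ i + j`, so the coefficient matrix is
unitriangular for the lexicographic order on `(j, -i)`.
-/

theorem linearIndependent_of_triangular {R M ι κ : Type*} [Ring R] [NoZeroDivisors R]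
    [AddCommGroup M] [Module R M] [PartialOrder κ] {v : ι → M} (φ : ι → M →ₗ[R] R)
    (key : ι → κ) (hdiag : ∀ i, φ i (v i) ≠ 0)
    (htri : ∀ i j, i ≠ j → φ i (v j) ≠ 0 → key i < key j) :
    LinearIndependent R v := by
  classical
  rw [linearIndependent_iff']
  intro s g hsum i hi
  by_contra hgi
  obtain ⟨i₀, hi₀, hmax⟩ := (s.filter (g · ≠ 0)).exists_maximalFor key ⟨i, by simp [hi, hgi]⟩
  rw [Finset.mem_filter] at hi₀
  have hcoord : ∑ j ∈ s, g j * φ i₀ (v j) = g i₀ * φ i₀ (v i₀) := by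
    refine Finset.sum_eq_single_of_mem i₀ hi₀.1 fun j hj hji₀ => ?_
    by_contra hne
    obtain ⟨hgj, hφj⟩ := mul_ne_zero_iff.mp hne
    have hlt := htri i₀ j (Ne.symm hji₀) hφj
    exact hlt.not_ge (hmax (Finset.mem_filter.mpr ⟨hj, hgj⟩) hlt.le)
  have hzero : ∑ j ∈ s, g j * φ i₀ (v j) = 0 := by
    simpa [map_sum] using congrArg (φ i₀) hsum
  exact mul_ne_zero hi₀.2 (hdiag i₀) (hcoord ▸ hzero)

namespace List

theorem take_two_drop_eq_pair_iff {α : Type*} {L : List α} {j : ℕ} {u v : α} :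
    (L.drop j).take 2 = [u, v] ↔ L[j]? = some u ∧ L[j + 1]? = some v := by
  induction j generalizing L with
  | zero => rcases L with _ | ⟨a, _ | ⟨b, t⟩⟩ <;> simp
  | succ j ih => rcases L with _ | ⟨a, t⟩ <;> simp [ih]

variable {n m : ℕ} {L : List (Fin n)}

theorem Pairwise.val_getElem_add_sub_le (hL : L.Pairwise (· < ·)) {a b : ℕ} (hab : a ≤ b)
    (hb : b < L.length) : L[a].val + (b - a) ≤ L[b].val := by
  obtain ⟨d, rfl⟩ := Nat.exists_eq_add_of_le hab
  induction d with
  | zero => simp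
  | succ d ih =>
    have hstep : L[a + d] < L[a + (d + 1)] :=
      hL.rel_get_of_lt (a := ⟨a + d, by omega⟩) (b := ⟨a + (d + 1), hb⟩) (by simp [Fin.lt_def])
    have := ih (by omega) (by omega)
    rw [Fin.lt_def] at hstep
    omega

theorem Pairwise.add_le_val_getElem (hL : L.Pairwise (· < ·)) (hm : ∀ x ∈ L, m ≤ x.val)
    {t : ℕ} (ht : t < L.length) : m + t ≤ L[t].val := by
  have := hL.val_getElem_add_sub_le (Nat.zero_le t) ht
  have := hm _ (L.getElem_mem (n := 0) (by omega))
  omega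

theorem Pairwise.val_getElem_add_length_sub_le (hL : L.Pairwise (· < ·)) {t : ℕ}
    (ht : t < L.length) : L[t].val + (L.length - t) ≤ n := by
  have := hL.val_getElem_add_sub_le (Nat.le_sub_one_of_lt ht) (by omega : L.length - 1 < L.length)
  have := (L[L.length - 1]'(by omega)).isLt
  omega

theorem Pairwise.val_getElem_eq_of_extremal (hL : L.Pairwise (· < ·)) (hm : ∀ x ∈ L, m ≤ x.val)
    {j : ℕ} (hj : j + 1 < L.length) (hu : L[j].val = m + j)
    (hv : L[j + 1].val = n - L.length + (j + 1)) {t : ℕ} (ht : t < L.length) :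
    L[t].val = if t ≤ j then m + t else n - L.length + t := by
  split_ifs with htj
  · have := hL.add_le_val_getElem hm ht
    have := hL.val_getElem_add_sub_le htj (by omega)
    omega
  · have := hL.val_getElem_add_sub_le (by omega : j + 1 ≤ t) ht
    have := hL.val_getElem_add_length_sub_le ht
    omega

end List

def adjacentPairSubsets (n m k j : ℕ) (u v : Fin n) : Finset (Finset (Fin n)) :=
  ((Finset.univ.filter (fun x : Fin n => m ≤ x.val)).powersetCard k).filter
    (fun s => ((s.sort (· ≤ ·)).drop j).take 2 = [u, v])

section adjacentPairSubsets

variable {n m k j : ℕ} {u v : Fin n} {s : Finset (Fin n)}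

theorem coeff_NCrestrict_esymAbove (F : Type) [CommSemiring F] :
    (NCrestrict (j + 1) (j + 2) (esymAbove F n m k)).coeff (FreeMonoid.ofList [u, v]) =
      (adjacentPairSubsets n m k j u v).card := by
  classical
  simp only [NCrestrict, esymAbove, adjacentPairSubsets, MonoidAlgebra.coeff_ofCoeff,
    MonoidAlgebra.coeff_sum, MonoidAlgebra.coeff_single, Finsupp.mapDomain_finsetSum,
    Finsupp.mapDomain_single, FreeMonoid.toList_ofList, Finsupp.finsetSum_apply,
    Finsupp.single_apply, EmbeddingLike.apply_eq_iff_eq, Nat.add_sub_cancel,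
    show j + 2 + 1 - (j + 1) = 2 by omega]
  rw [Finset.sum_boole]

theorem mem_adjacentPairSubsets :
    s ∈ adjacentPairSubsets n m k j u v ↔ (∀ x ∈ s, m ≤ x.val) ∧ s.card = k ∧
      (s.sort (· ≤ ·))[j]? = some u ∧ (s.sort (· ≤ ·))[j + 1]? = some v := by
  simp [adjacentPairSubsets, Finset.mem_powersetCard, Finset.subset_iff,
    List.take_two_drop_eq_pair_iff, and_assoc]

theorem le_of_mem_adjacentPairSubsets (hs : s ∈ adjacentPairSubsets n m k j u v) :
    m + j ≤ u.val ∧ v.val + (k - (j + 1)) ≤ n := by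
  obtain ⟨hm, rfl, hu, hv⟩ := mem_adjacentPairSubsets.mp hs
  obtain ⟨hj, rfl⟩ := List.getElem?_eq_some_iff.mp hu
  obtain ⟨hj1, rfl⟩ := List.getElem?_eq_some_iff.mp hv
  have hL := List.sortedLT_iff_pairwise.mp (Finset.sortedLT_sort s)
  have hm' : ∀ x ∈ s.sort (· ≤ ·), m ≤ x.val := fun x hx => hm x ((Finset.mem_sort _).mp hx)
  have := hL.val_getElem_add_length_sub_le hj1
  exact ⟨hL.add_le_val_getElem hm' hj, by simpa using this⟩

theorem card_adjacentPairSubsets_of_extremal (hjk : j + 2 ≤ k) (hmk : m + k ≤ n)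
    (hu : u.val = m + j) (hv : v.val = n - k + (j + 1)) :
    (adjacentPairSubsets n m k j u v).card = 1 := by
  classical
  let f : Fin k → Fin n := fun t =>
    ⟨if t.val ≤ j then m + t else n - k + t, by split_ifs <;> omega⟩
  have hf : StrictMono f := fun a b hab => by
    simp only [f, Fin.lt_def] at hab ⊢
    split_ifs <;> omega
  have hL₀ : (List.ofFn f).Pairwise (· < ·) := List.sortedLT_iff_pairwise.mp hf.sortedLT_ofFn
  have hsort₀ : (List.ofFn f).toFinset.sort (· ≤ ·) = List.ofFn f :=
    (List.toFinset_sort _ hL₀.nodup).mpr (hL₀.imp le_of_lt)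
  refine Finset.card_eq_one.mpr ⟨(List.ofFn f).toFinset,
    Finset.eq_singleton_iff_unique_mem.mpr ⟨mem_adjacentPairSubsets.mpr ⟨?_, ?_, ?_, ?_⟩, ?_⟩⟩
  · simp only [List.mem_toFinset, List.mem_ofFn, forall_exists_index]
    rintro _ t rfl
    simp only [f]
    split_ifs <;> omega
  · rw [List.toFinset_card_of_nodup hL₀.nodup, List.length_ofFn]
  · simp [hsort₀, f, Fin.ext_iff, hu, (by omega : j < k)]
  · simp [hsort₀, f, Fin.ext_iff, hv, (by omega : j + 1 < k)]
  · intro s hs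
    obtain ⟨hm, hk, hsu, hsv⟩ := mem_adjacentPairSubsets.mp hs
    obtain ⟨hj, hju⟩ := List.getElem?_eq_some_iff.mp hsu
    obtain ⟨hj1, hjv⟩ := List.getElem?_eq_some_iff.mp hsv
    have hL := List.sortedLT_iff_pairwise.mp (Finset.sortedLT_sort s)
    have hm' : ∀ x ∈ s.sort (· ≤ ·), m ≤ x.val := fun x hx => hm x ((Finset.mem_sort _).mp hx)
    have hlen : (s.sort (· ≤ ·)).length = k := by simp [hk]
    have hsort : s.sort (· ≤ ·) = List.ofFn f := by
      refine List.ext_getElem (by simp [hlen]) fun t ht _ => Fin.ext ?_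
      rw [hL.val_getElem_eq_of_extremal hm' hj1 (by rw [hju, hu]) (by rw [hjv, hv, hlen]) ht]
      simp [f, hlen]
    rw [← Finset.sort_toFinset s (· ≤ ·), hsort]

end adjacentPairSubsets

theorem esym_restrictions_linearIndependent_general (F : Type) [Field F] (n k : ℕ) :
    LinearIndependent F (fun p : Fin (n - k) × Fin (k - 1) =>
      NCrestrict (p.2.val + 1) (p.2.val + 2) (esymAbove F n (p.1.val + 1) k)) := by
  let u : Fin (n - k) × Fin (k - 1) → Fin n := fun p => ⟨p.1 + 1 + p.2, by omega⟩
  let v : Fin (n - k) × Fin (k - 1) → Fin n := fun p =>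
    ⟨n - k + (p.2 + 1), by have := p.1.isLt; omega⟩
  refine linearIndependent_of_triangular
    (fun p => Finsupp.lapply (FreeMonoid.ofList [u p, v p]) ∘ₗ
      (MonoidAlgebra.coeffLinearEquiv F).toLinearMap)
    (fun p => toLex (p.2, OrderDual.toDual p.1)) (fun p => ?_) (fun p q hpq hcoeff => ?_) <;>
  simp only [LinearMap.comp_apply, LinearEquiv.coe_coe, MonoidAlgebra.coeffLinearEquiv_apply,
    Finsupp.lapply_apply, coeff_NCrestrict_esymAbove] at *
  · rw [card_adjacentPairSubsets_of_extremal (by omega) (by omega) rfl rfl, Nat.cast_one]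
    exact one_ne_zero
  · obtain ⟨s, hs⟩ := Finset.card_ne_zero.mp fun h => hcoeff (by rw [h, Nat.cast_zero])
    have := le_of_mem_adjacentPairSubsets hs
    rw [Prod.Lex.toLex_lt_toLex']
    simp only [u, v, OrderDual.toDual_lt_toDual, Fin.le_def, Fin.lt_def, Ne, Prod.ext_iff,
      Fin.ext_iff] at this hpq ⊢
    omega

/-- For `1 < k < n`, the `(n-k)(k-1)` degree-2 polynomials
`f_{i,j} := (E_{n-i}^{k}(x_{i+1},…,x_n))^{[j,j+1]}`, for `i ∈ [n-k]` and
`j ∈ [k-1]`, are linearly independent over `F`. -/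
theorem esym_restrictions_linearIndependent (F : Type) [Field F] (n k : ℕ)
    (hk : 1 < k) (hkn : k < n) :
    LinearIndependent F (fun p : Fin (n - k) × Fin (k - 1) =>
      NCrestrict (p.2.val + 1) (p.2.val + 2) (esymAbove F n (p.1.val + 1) k)) :=
  esym_restrictions_linearIndependent_general F n k
end
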